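/- arXiv:2012.07218 — 2 statements merged into one kernel-verified Lean document; each statement's English description precedes it below -/
import Mathlib

section
/- Without IRS, with channel power gains |h_AU|², |h_DA|² > 0 and interference gain |g|², the FD minimum weighted power L = γ̄₁|g|²/(|h_DA|²|h_AU|²) + γ̄₂/|h_DA|² + γ̄₃/|h_AU|² does not exceed the HD minimum weighted power L̃ = κ_U(2^{2γ_A}−1)σ_A²/(2|h_AU|²) + κ_A(2^{2γ_D}−1)σ_D²/(2|h_DA|²) if and only if κ_A|g|² ≤ κ_U(2^{γ_A}−1)|h_DA|²/(2(2^{γ_D}−1)) + κ_A(2^{γ_D}−1)|h_AU|²σ_D²/(2(2^{γ_A}−1)σ_A²), where γ̄₁ = κ_A(2^{γ_D}−1)(2^{γ_A}−1)σ_A², γ̄₂ = κ_A(2^{γ_D}−1)σ_D², γ̄₃ = κ_U(2^{γ_A}−1)σ_A². -/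
theorem fd_le_hd_iff_no_irs
    (κU κA γA γD σA2 σD2 hAU2 hDA2 g2 : ℝ)
    (hκU : 0 < κU) (hκA : 0 < κA) (hγA : 0 < γA) (hγD : 0 < γD)
    (hσA : 0 < σA2) (hσD : 0 < σD2) (hAU : 0 < hAU2) (hDA : 0 < hDA2) (hg : 0 ≤ g2) :
    let γ1 : ℝ := κA * ((2 : ℝ) ^ γD - 1) * ((2 : ℝ) ^ γA - 1) * σA2
    let γ2 : ℝ := κA * ((2 : ℝ) ^ γD - 1) * σD2
    let γ3 : ℝ := κU * ((2 : ℝ) ^ γA - 1) * σA2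
    let L : ℝ := γ1 * g2 / (hDA2 * hAU2) + γ2 / hDA2 + γ3 / hAU2
    let Lt : ℝ := κU * ((2 : ℝ) ^ (2 * γA) - 1) * σA2 / (2 * hAU2)
                    + κA * ((2 : ℝ) ^ (2 * γD) - 1) * σD2 / (2 * hDA2)
    L ≤ Lt ↔
      κA * g2 ≤ κU * ((2 : ℝ) ^ γA - 1) * hDA2 / (2 * ((2 : ℝ) ^ γD - 1))
                  + κA * ((2 : ℝ) ^ γD - 1) * hAU2 * σD2 / (2 * ((2 : ℝ) ^ γA - 1) * σA2) := by
  intro γ1 γ2 γ3 L Lt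
  have ha : 0 < (2 : ℝ) ^ γA - 1 := by
    have h := Real.rpow_lt_rpow_of_exponent_lt (x := 2) (by norm_num) (show (0:ℝ) < γA from hγA)
    rw [Real.rpow_zero] at h
    linarith
  have hb : 0 < (2 : ℝ) ^ γD - 1 := by
    have h := Real.rpow_lt_rpow_of_exponent_lt (x := 2) (by norm_num) (show (0:ℝ) < γD from hγD)
    rw [Real.rpow_zero] at h
    linarith
  have h2A : (2 : ℝ) ^ (2 * γA) = ((2 : ℝ) ^ γA) ^ 2 := by
    rw [two_mul, Real.rpow_add (by norm_num : (0:ℝ) < 2)]; ring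
  have h2D : (2 : ℝ) ^ (2 * γD) = ((2 : ℝ) ^ γD) ^ 2 := by
    rw [two_mul, Real.rpow_add (by norm_num : (0:ℝ) < 2)]; ring
  set a := (2 : ℝ) ^ γA - 1 with hadef
  set b := (2 : ℝ) ^ γD - 1 with hbdef
  have hea : (2 : ℝ) ^ γA = a + 1 := by rw [hadef]; ring
  have heb : (2 : ℝ) ^ γD = b + 1 := by rw [hbdef]; ring
  set N : ℝ := κU * a ^ 2 * σA2 * hDA2 + κA * b ^ 2 * σD2 * hAU2
      - 2 * κA * b * a * σA2 * g2 with hN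
  have e1 : Lt - L = N / (2 * hDA2 * hAU2) := by
    simp only [hN, Lt, L, γ1, γ2, γ3, h2A, h2D, hea, heb]
    field_simp
    ring
  have e2 : (κU * a * hDA2 / (2 * b) + κA * b * hAU2 * σD2 / (2 * a * σA2)) - κA * g2
      = N / (2 * b * a * σA2) := by
    simp only [hN]
    field_simp
  rw [← sub_nonneg, e1, ← sub_nonneg (b := κA * g2), e2,
    le_div_iff₀ (by positivity), le_div_iff₀ (by positivity), zero_mul, zero_mul]
end

section
/- Suppose γ_A, γ_D > 0, κ_U, κ_A > 0, σ_A², σ_D² > 0, |g|² ≥ 0, and channel gains λ_U^{**}, λ_D^{**} > 0 achieved by CGM beamforming, with interference terms I_U = |f_DU^H θ_U^{**}|² and I_D = |g_DU^H θ_D^{**}|². If κ_A|g|²/N² ≤ κ_U·λ_D^{LB}·(2^{γ_A}−1)/(6(2^{γ_D}−1)N²) + κ_A·λ_U^{LB}·(2^{γ_D}−1)σ_D²/(6(2^{γ_A}−1)σ_A²N²) − κ_A(I_U + I_D)/N², where λ_U^{LB} = (|h_AU| − |f_AU^H θ_U^{**}|)² and λ_D^{LB} = (|h_DA| − |g_DA^H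 θ_D^{**}|)², then the HD power L̃₁ = κ_U(2^{2γ_A}−1)σ_A²/(2λ_U^{**}) + κ_A(2^{2γ_D}−1)σ_D²/(2λ_D^{**}) is at least the FD power evaluated at the same beamformers: L₁(θ_U^{**}, θ_D^{**}) = γ̄₁λ_DU^{**}/(λ_D^{**}λ_U^{**}) + γ̄₂/λ_D^{**} + γ̄₃/λ_U^{**}, with λ_DU^{**} ≤ 3(|g|² + I_U + I_D), γ̄₁ = κ_A(2^{γ_D}−1)(2^{γ_A}−1)σ_A², γ̄₂ = κ_A(2^{γ_D}−1)σ_D², γ̄₃ = κ_U(2^{γ_A}−1)σ_A². -/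
/-!
With `a = 2^γ_A - 1` and `b = 2^γ_D - 1` we have `2^{2γ} - 1 = a² + 2a`, so the HD power
`L̃₁` exceeds `L₁` by `κ_U a² σ_A²/(2λ_U) + κ_A b² σ_D²/(2λ_D) - γ̄₁ λ_DU/(λ_D λ_U)`. This is
nonnegative as soon as `2 γ̄₁ λ_DU ≤ κ_U a² σ_A² λ_D + κ_A b² σ_D² λ_U`, and the sufficient
condition, cleared of denominators, says exactly this with `λ_DU` replaced by its upper bound
`3(|g|² + I_U + I_D)` and `λ_U, λ_D` by their lower bounds `λ_U^{LB}, λ_D^{LB}`.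
-/

theorem Real.two_rpow_two_mul_sub_one (γ : ℝ) :
    (2 : ℝ) ^ (2 * γ) - 1 = ((2 : ℝ) ^ γ - 1) ^ 2 + 2 * ((2 : ℝ) ^ γ - 1) := by
  rw [mul_comm, Real.rpow_mul zero_le_two, Real.rpow_two]
  ring

section Norms

variable {E : Type*} [SeminormedAddCommGroup E]

theorem sq_norm_sub_norm_le_sq_norm_add (x y : E) : (‖x‖ - ‖y‖) ^ 2 ≤ ‖x + y‖ ^ 2 := by
  have h := abs_norm_sub_norm_le x (-y)
  rw [norm_neg, sub_neg_eq_add] at h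
  simpa only [sq_abs] using pow_le_pow_left₀ (abs_nonneg _) h 2

theorem sq_norm_add_add_le_three_mul (x y z : E) :
    ‖x + y + z‖ ^ 2 ≤ 3 * (‖x‖ ^ 2 + (‖y‖ ^ 2 + ‖z‖ ^ 2)) := by
  have h : ‖x + y + z‖ ≤ ‖x‖ + ‖y‖ + ‖z‖ := norm_add₃_le
  nlinarith [norm_nonneg (x + y + z), sq_nonneg (‖x‖ - ‖y‖), sq_nonneg (‖y‖ - ‖z‖),
    sq_nonneg (‖x‖ - ‖z‖)]

end Norms

theorem div_mul_le_div_two_mul_add_div_two_mul {c p q d u : ℝ} (hp : 0 ≤ p) (hq : 0 ≤ q)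
    (hd : 0 ≤ d) (hu : 0 ≤ u) (h : 2 * c ≤ p * d + q * u) :
    c / (d * u) ≤ p / (2 * u) + q / (2 * d) := by
  rcases hd.eq_or_lt with rfl | hd
  · simp only [zero_mul, div_zero, mul_zero, add_zero]
    positivity
  rcases hu.eq_or_lt with rfl | hu
  · simp only [mul_zero, div_zero, zero_add]
    positivity
  rw [div_add_div _ _ (by positivity) (by positivity), div_le_div_iff₀ (by positivity)
    (by positivity)]
  nlinarith [mul_pos hd hu]

theorem six_mul_le_of_sufficient_condition {κU κA a b σA σD N G I LD LU : ℝ}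
    (ha : 0 < a) (hb : 0 < b) (hσA : 0 < σA) (hN : N ≠ 0)
    (h : κA * G / N ^ 2 ≤ κU * LD * a / (6 * b * N ^ 2) + κA * LU * b * σD / (6 * a * σA * N ^ 2)
      - κA * I / N ^ 2) :
    6 * (κA * b * a * σA) * (G + I) ≤ κU * a ^ 2 * σA * LD + κA * b ^ 2 * σD * LU := by
  have hpos : 0 < 6 * a * b * σA * N ^ 2 := by positivity
  have key : (κU * LD * a / (6 * b * N ^ 2) + κA * LU * b * σD / (6 * a * σA * N ^ 2)
      - κA * I / N ^ 2) - κA * G / N ^ 2 = (κU * a ^ 2 * σA * LD + κA * b ^ 2 * σD * LU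
      - 6 * (κA * b * a * σA) * (G + I)) / (6 * a * b * σA * N ^ 2) := by
    field_simp
    ring
  rw [← sub_nonneg] at h ⊢
  rwa [key, le_div_iff₀ hpos, zero_mul] at h

theorem fd_outperforms_hd_sufficient_condition_general
    (κU κA γA γD σA2 σD2 N : ℝ)
    (hAU hDA g cfAU cgDA cfDU cgDU : ℂ)
    (hκU : 0 < κU) (hκA : 0 < κA) (hγA : 0 < γA) (hγD : 0 < γD)
    (hσA : 0 < σA2) (hσD : 0 < σD2) (hN : 0 < N)
    (hcond :
      κA * ‖g‖ ^ 2 / N ^ 2 ≤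
        κU * (‖hDA‖ - ‖cgDA‖) ^ 2 * ((2 : ℝ) ^ γA - 1)
            / (6 * ((2 : ℝ) ^ γD - 1) * N ^ 2)
          + κA * (‖hAU‖ - ‖cfAU‖) ^ 2 * ((2 : ℝ) ^ γD - 1) * σD2
            / (6 * ((2 : ℝ) ^ γA - 1) * σA2 * N ^ 2)
          - κA * (‖cfDU‖ ^ 2 + ‖cgDU‖ ^ 2) / N ^ 2) :
    let lU : ℝ := ‖hAU + cfAU‖ ^ 2
    let lD : ℝ := ‖hDA + cgDA‖ ^ 2
    let lDU : ℝ := ‖g + cfDU + cgDU‖ ^ 2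
    let γ1 : ℝ := κA * ((2 : ℝ) ^ γD - 1) * ((2 : ℝ) ^ γA - 1) * σA2
    let γ2 : ℝ := κA * ((2 : ℝ) ^ γD - 1) * σD2
    let γ3 : ℝ := κU * ((2 : ℝ) ^ γA - 1) * σA2
    let L1 : ℝ := γ1 * lDU / (lD * lU) + γ2 / lD + γ3 / lU
    let Lt1 : ℝ := κU * ((2 : ℝ) ^ (2 * γA) - 1) * σA2 / (2 * lU)
                     + κA * ((2 : ℝ) ^ (2 * γD) - 1) * σD2 / (2 * lD)
    L1 ≤ Lt1 := by
  intro lU lD lDU γ1 γ2 γ3 L1 Lt1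
  set a := (2 : ℝ) ^ γA - 1
  set b := (2 : ℝ) ^ γD - 1
  have ha : 0 < a := sub_pos.2 (Real.one_lt_rpow one_lt_two hγA)
  have hb : 0 < b := sub_pos.2 (Real.one_lt_rpow one_lt_two hγD)
  have hA2 : (2 : ℝ) ^ (2 * γA) - 1 = a ^ 2 + 2 * a := Real.two_rpow_two_mul_sub_one γA
  have hD2 : (2 : ℝ) ^ (2 * γD) - 1 = b ^ 2 + 2 * b := Real.two_rpow_two_mul_sub_one γD
  have hcross : 2 * (γ1 * lDU) ≤ κU * a ^ 2 * σA2 * lD + κA * b ^ 2 * σD2 * lU :=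
    calc 2 * (γ1 * lDU) ≤ 6 * γ1 * (‖g‖ ^ 2 + (‖cfDU‖ ^ 2 + ‖cgDU‖ ^ 2)) := by
          have := mul_le_mul_of_nonneg_left (sq_norm_add_add_le_three_mul g cfDU cgDU)
            (show 0 ≤ 2 * γ1 by positivity)
          linarith
      _ ≤ κU * a ^ 2 * σA2 * (‖hDA‖ - ‖cgDA‖) ^ 2 + κA * b ^ 2 * σD2 * (‖hAU‖ - ‖cfAU‖) ^ 2 :=
          six_mul_le_of_sufficient_condition ha hb hσA hN.ne' hcond
      _ ≤ κU * a ^ 2 * σA2 * lD + κA * b ^ 2 * σD2 * lU := by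
          gcongr <;> exact sq_norm_sub_norm_le_sq_norm_add _ _
  calc L1 = γ1 * lDU / (lD * lU) + (γ2 / lD + γ3 / lU) := add_assoc _ _ _
    _ ≤ κU * a ^ 2 * σA2 / (2 * lU) + κA * b ^ 2 * σD2 / (2 * lD) + (γ2 / lD + γ3 / lU) := by
        gcongr
        exact div_mul_le_div_two_mul_add_div_two_mul (by positivity) (by positivity)
          (by positivity) (by positivity) hcross
    _ = Lt1 := by simp only [Lt1, hA2, hD2]; ring

theorem fd_outperforms_hd_sufficient_condition
    (κU κA γA γD σA2 σD2 N : ℝ)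
    (hAU hDA g cfAU cgDA cfDU cgDU : ℂ)
    (hκU : 0 < κU) (hκA : 0 < κA) (hγA : 0 < γA) (hγD : 0 < γD)
    (hσA : 0 < σA2) (hσD : 0 < σD2) (hN : 0 < N)
    (hlU : 0 < ‖hAU + cfAU‖ ^ 2)
    (hlD : 0 < ‖hDA + cgDA‖ ^ 2)
    (hcond :
      κA * ‖g‖ ^ 2 / N ^ 2 ≤
        κU * (‖hDA‖ - ‖cgDA‖) ^ 2 * ((2 : ℝ) ^ γA - 1)
            / (6 * ((2 : ℝ) ^ γD - 1) * N ^ 2)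
          + κA * (‖hAU‖ - ‖cfAU‖) ^ 2 * ((2 : ℝ) ^ γD - 1) * σD2
            / (6 * ((2 : ℝ) ^ γA - 1) * σA2 * N ^ 2)
          - κA * (‖cfDU‖ ^ 2 + ‖cgDU‖ ^ 2) / N ^ 2) :
    let lU : ℝ := ‖hAU + cfAU‖ ^ 2
    let lD : ℝ := ‖hDA + cgDA‖ ^ 2
    let lDU : ℝ := ‖g + cfDU + cgDU‖ ^ 2
    let γ1 : ℝ := κA * ((2 : ℝ) ^ γD - 1) * ((2 : ℝ) ^ γA - 1) * σA2
    let γ2 : ℝ := κA * ((2 : ℝ) ^ γD - 1) * σD2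
    let γ3 : ℝ := κU * ((2 : ℝ) ^ γA - 1) * σA2
    let L1 : ℝ := γ1 * lDU / (lD * lU) + γ2 / lD + γ3 / lU
    let Lt1 : ℝ := κU * ((2 : ℝ) ^ (2 * γA) - 1) * σA2 / (2 * lU)
                     + κA * ((2 : ℝ) ^ (2 * γD) - 1) * σD2 / (2 * lD)
    L1 ≤ Lt1 :=
  fd_outperforms_hd_sufficient_condition_general κU κA γA γD σA2 σD2 N hAU hDA g cfAU cgDA cfDU cgDU
    hκU hκA hγA hγD hσA hσD hN hcond
end
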